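/- arXiv:1904.09915 — 8 statements merged into one kernel-verified Lean document; each statement's English description precedes it below -/
import Mathlib

section
/- Let n ≥ 1 and let A be a real symmetric (2n+1)×(2n+1) semi-bipartite block matrix with parts V₁ (of size n+1) and V₂ (of size n). Let a, b ∈ V₁ be distinct indices such that det(A₋ₐ) ≠ 0 and det(A₋ᵦ) ≠ 0. For each v ∈ V₁ let f_v : [0,1] → ℝ be a continuous function such that: f_a(0) = 0; f_b(1) = 0; f_v(t) ≠ 0 for every t ∈ [0,1] and every v ∈ V₁ \ {a,b}; and there is no t ∈ [0,1] with f_a(t) = 0 and f_b(t) = 0 simultaneously. For t ∈ [0,1] let F(t) be the diagonal matrix with diagonal entry f_v(t) at each v ∈ V₁ and 1 at each v ∈ V₂, and set H(t) = F(t) A F(t). Then for every t ∈ [0,1] the kernel of H(t) is one-dimensional and every vector in it vanishes on all coordinates in V₂; moreover ker H(0) is spanned by the standard basis vector e_a and ker H(1) is spanned by the standard basis vector e_b. -/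
/-!
Write `H(t) = D A D` with `D = diag d`. Since the `V₁ × V₁` block of `A` vanishes and
`|V₂| < |V₁|`, the `V₂ × V₁` block has a kernel vector, giving a kernel vector `z₀` of `A`
supported on `V₁`. If `A₋ₚ` is nonsingular, a vector `u` with `u p = 0` and `(A u) w = 0` for
`w ≠ p` is zero; hence `ker A = span {z₀}`. When `d` has no zero, `ker H = span {z₀ / d}`;
when `d` vanishes exactly at `p ∈ {a, b}`, then `u = d * z` is such a vector for every
`z ∈ ker H`, so `ker H = span {e_p}`.
-/

open Matrix

namespace Matrix

variable {ι K : Type*} [Fintype ι] [DecidableEq ι] [Field K]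

/-- The principal submatrix `A₋ₚ`. -/
abbrev deleteRowCol (A : Matrix ι ι K) (p : ι) : Matrix {w // w ≠ p} {w // w ≠ p} K :=
  A.submatrix Subtype.val Subtype.val

theorem eq_zero_of_mulVec_eq_zero_off {A : Matrix ι ι K} {p : ι}
    (hp : (A.deleteRowCol p).det ≠ 0)
    {u : ι → K} (hup : u p = 0) (hAu : ∀ w ≠ p, (A *ᵥ u) w = 0) : u = 0 := by
  have hrestrict : A.deleteRowCol p *ᵥ (fun w => u w) = 0 := by
    ext i
    rw [Pi.zero_apply, ← hAu i i.2, mulVec, mulVec, dotProduct, dotProduct,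
      ← Fintype.sum_subtype_add_sum_subtype (· ≠ p)]
    have hp' : ∀ w : {w // ¬ w ≠ p}, A i w * u w = 0 := fun w => by
      rw [not_not.mp w.2, hup, mul_zero]
    simp [hp']
  have hzero := eq_zero_of_mulVec_eq_zero hp hrestrict
  ext w
  by_cases hw : w = p
  · rw [hw, hup, Pi.zero_apply]
  · exact congrFun hzero ⟨w, hw⟩

theorem ker_mulVecLin_eq_span_singleton_of_det_ne_zero {A : Matrix ι ι K} {p : ι}
    (hp : (A.deleteRowCol p).det ≠ 0)
    {z₀ : ι → K} (hz₀ : z₀ ≠ 0) (hAz₀ : A *ᵥ z₀ = 0) :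
    LinearMap.ker A.mulVecLin = Submodule.span K {z₀} := by
  have hz₀p : z₀ p ≠ 0 := fun h =>
    hz₀ (eq_zero_of_mulVec_eq_zero_off hp h fun w _ => by rw [hAz₀, Pi.zero_apply])
  refine le_antisymm (fun z hz => ?_) ((Submodule.span_singleton_le_iff_mem _ _).2 hAz₀)
  rw [LinearMap.mem_ker, mulVecLin_apply] at hz
  have hdiff : z - (z p / z₀ p) • z₀ = 0 := by
    refine eq_zero_of_mulVec_eq_zero_off hp ?_ fun w _ => ?_
    · simp [hz₀p]
    · rw [mulVec_sub, mulVec_smul, hz, hAz₀, smul_zero, sub_zero, Pi.zero_apply]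
  rw [sub_eq_zero.mp hdiff]
  exact Submodule.smul_mem _ _ (Submodule.mem_span_singleton_self _)

theorem diagonal_mul_mul_diagonal_mulVec (d : ι → K) (A : Matrix ι ι K) (z : ι → K) :
    (diagonal d * A * diagonal d) *ᵥ z = d * (A *ᵥ (d * z)) := by
  ext w
  rw [← mulVec_mulVec, ← mulVec_mulVec, mulVec_diagonal, Pi.mul_apply]
  congr 2
  ext x
  exact mulVec_diagonal d z x

theorem ker_diagonal_mul_mul_diagonal_of_eq_zero {A : Matrix ι ι K} {p : ι}
    (hp : (A.deleteRowCol p).det ≠ 0) {d : ι → K} (hdp : d p = 0) (hd : ∀ w ≠ p, d w ≠ 0) :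
    LinearMap.ker (diagonal d * A * diagonal d).mulVecLin = Submodule.span K {Pi.single p 1} := by
  have hd_single : d * Pi.single p 1 = 0 := by
    ext w
    by_cases hw : w = p <;> simp [hw, hdp]
  refine le_antisymm (fun z hz => ?_) ?_
  · rw [LinearMap.mem_ker, mulVecLin_apply, diagonal_mul_mul_diagonal_mulVec] at hz
    have hdz : d * z = 0 := by
      refine eq_zero_of_mulVec_eq_zero_off hp (by simp [hdp]) fun w hw => ?_
      exact (mul_eq_zero.mp (congrFun hz w)).resolve_left (hd w hw)
    have hz_single : z = z p • Pi.single p 1 := by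
      ext w
      by_cases hw : w = p
      · simp [hw]
      · simpa [hw, hd w hw] using congrFun hdz w
    rw [hz_single]
    exact Submodule.smul_mem _ _ (Submodule.mem_span_singleton_self _)
  · rw [Submodule.span_singleton_le_iff_mem, LinearMap.mem_ker, mulVecLin_apply,
      diagonal_mul_mul_diagonal_mulVec, hd_single, mulVec_zero, mul_zero]

theorem ker_diagonal_mul_mul_diagonal_of_ne_zero {A : Matrix ι ι K} {p : ι}
    (hp : (A.deleteRowCol p).det ≠ 0) {z₀ : ι → K} (hz₀ : z₀ ≠ 0) (hAz₀ : A *ᵥ z₀ = 0)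
    {d : ι → K} (hd : ∀ w, d w ≠ 0) :
    LinearMap.ker (diagonal d * A * diagonal d).mulVecLin = Submodule.span K {z₀ / d} := by
  have hd_mul_eq_zero : ∀ v : ι → K, d * v = 0 ↔ v = 0 := fun v => by
    simp only [funext_iff, Pi.mul_apply, Pi.zero_apply, mul_eq_zero, hd, false_or]
  ext z
  rw [LinearMap.mem_ker, mulVecLin_apply, diagonal_mul_mul_diagonal_mulVec, hd_mul_eq_zero,
    ← mulVecLin_apply, ← LinearMap.mem_ker,
    ker_mulVecLin_eq_span_singleton_of_det_ne_zero hp hz₀ hAz₀, Submodule.mem_span_singleton,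
    Submodule.mem_span_singleton]
  refine exists_congr fun c => ?_
  simp only [funext_iff, Pi.smul_apply, Pi.mul_apply, Pi.div_apply, smul_eq_mul]
  refine forall_congr' fun w => ?_
  rw [mul_div_assoc', div_eq_iff (hd w), mul_comm (z w)]

theorem exists_ne_zero_mulVec_eq_zero_of_toBlocks₁₁_eq_zero {α β : Type*} [Fintype α]
    [Fintype β] (hcard : Fintype.card β < Fintype.card α) {A : Matrix (α ⊕ β) (α ⊕ β) K}
    (hA : A.toBlocks₁₁ = 0) :
    ∃ z : α ⊕ β → K, z ≠ 0 ∧ (∀ j, z (Sum.inr j) = 0) ∧ A *ᵥ z = 0 := by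
  obtain ⟨x, hx, hx0⟩ := (Submodule.ne_bot_iff _).mp
    (LinearMap.ker_ne_bot_of_finrank_lt (f := A.toBlocks₂₁.mulVecLin) (by simpa using hcard))
  rw [LinearMap.mem_ker, mulVecLin_apply] at hx
  refine ⟨Sum.elim x 0, fun h => hx0 (funext fun v => congrFun h (.inl v)), fun j => rfl, ?_⟩
  rw [← fromBlocks_toBlocks A, fromBlocks_mulVec]
  simp [hA, hx]

end Matrix

section ControlVector

variable {α β M : Type*} [Zero M] [One M] [NeZero (1 : M)] {g : α → M} {a b : α}

theorem sumElim_one_ne_zero_of_ne_inl (hother : ∀ v, v ≠ a → v ≠ b → g v ≠ 0)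
    (hnotboth : ¬ (g a = 0 ∧ g b = 0)) {p : α} (hp : g p = 0) :
    ∀ w ≠ Sum.inl p, Sum.elim g (1 : β → M) w ≠ 0 := by
  have hzero_mem : ∀ v, g v = 0 → v = a ∨ v = b := fun v hv => by
    by_contra! h
    exact hother v h.1 h.2 hv
  rintro (v | j) hw hv
  · rcases hzero_mem p hp with rfl | rfl <;> rcases hzero_mem v hv with rfl | rfl <;> tauto
  · exact one_ne_zero hv

theorem sumElim_one_ne_zero (hother : ∀ v, v ≠ a → v ≠ b → g v ≠ 0) (ha : g a ≠ 0)
    (hb : g b ≠ 0) : ∀ w, Sum.elim g (1 : β → M) w ≠ 0 := by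
  rintro (v | j)
  · rcases eq_or_ne v a with rfl | hva
    · exact ha
    rcases eq_or_ne v b with rfl | hvb
    · exact hb
    exact hother v hva hvb
  · exact one_ne_zero

end ControlVector

theorem stirap_transfer_general (n : ℕ)
    (A : Matrix (Fin (n + 1) ⊕ Fin n) (Fin (n + 1) ⊕ Fin n) ℝ)
    (hbip : ∀ u v : Fin (n + 1), A (Sum.inl u) (Sum.inl v) = 0)
    (a b : Fin (n + 1))
    (ha : (A.submatrix
        (fun i : {w : Fin (n + 1) ⊕ Fin n // w ≠ Sum.inl a} => (i : Fin (n + 1) ⊕ Fin n))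
        (fun j : {w : Fin (n + 1) ⊕ Fin n // w ≠ Sum.inl a} => (j : Fin (n + 1) ⊕ Fin n))).det ≠ 0)
    (hb : (A.submatrix
        (fun i : {w : Fin (n + 1) ⊕ Fin n // w ≠ Sum.inl b} => (i : Fin (n + 1) ⊕ Fin n))
        (fun j : {w : Fin (n + 1) ⊕ Fin n // w ≠ Sum.inl b} => (j : Fin (n + 1) ⊕ Fin n))).det ≠ 0)
    (f : Fin (n + 1) → ℝ → ℝ)
    (hfa0 : f a 0 = 0) (hfb1 : f b 1 = 0)
    (hfother : ∀ v : Fin (n + 1), v ≠ a → v ≠ b → ∀ t ∈ Set.Icc (0 : ℝ) 1, f v t ≠ 0)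
    (hnotboth : ∀ t ∈ Set.Icc (0 : ℝ) 1, ¬ (f a t = 0 ∧ f b t = 0))
    (F : ℝ → Matrix (Fin (n + 1) ⊕ Fin n) (Fin (n + 1) ⊕ Fin n) ℝ)
    (hF : ∀ t, F t = Matrix.diagonal (Sum.elim (fun v => f v t) (fun _ => (1 : ℝ))))
    (H : ℝ → Matrix (Fin (n + 1) ⊕ Fin n) (Fin (n + 1) ⊕ Fin n) ℝ)
    (hH : ∀ t, H t = F t * A * F t) :
    (∀ t ∈ Set.Icc (0 : ℝ) 1,
      Module.finrank ℝ (LinearMap.ker (H t).mulVecLin) = 1 ∧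
      ∀ z ∈ LinearMap.ker (H t).mulVecLin, ∀ w : Fin n, z (Sum.inr w) = 0) ∧
    LinearMap.ker (H 0).mulVecLin
      = Submodule.span ℝ {Pi.single (Sum.inl a) (1 : ℝ)} ∧
    LinearMap.ker (H 1).mulVecLin
      = Submodule.span ℝ {Pi.single (Sum.inl b) (1 : ℝ)} := by
  set d : ℝ → Fin (n + 1) ⊕ Fin n → ℝ := fun t => Sum.elim (fun v => f v t) 1
  have hHd : ∀ t, H t = diagonal (d t) * A * diagonal (d t) := fun t => by rw [hH, hF]; rfl
  have hker_zero : ∀ t ∈ Set.Icc (0 : ℝ) 1, ∀ p, f p t = 0 → (A.deleteRowCol (.inl p)).det ≠ 0 →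
      LinearMap.ker (H t).mulVecLin = Submodule.span ℝ {Pi.single (Sum.inl p) 1} :=
    fun t ht p hp hdet => hHd t ▸ ker_diagonal_mul_mul_diagonal_of_eq_zero hdet hp
      (sumElim_one_ne_zero_of_ne_inl (fun v ha hb => hfother v ha hb t ht) (hnotboth t ht) hp)
  obtain ⟨z₀, hz₀, hz₀_inr, hAz₀⟩ :=
    exists_ne_zero_mulVec_eq_zero_of_toBlocks₁₁_eq_zero (by simp) (A := A) (by ext; apply hbip)
  have hker : ∀ t ∈ Set.Icc (0 : ℝ) 1, ∃ v : Fin (n + 1) ⊕ Fin n → ℝ,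
      v ≠ 0 ∧ (∀ j, v (Sum.inr j) = 0) ∧ LinearMap.ker (H t).mulVecLin = Submodule.span ℝ {v} := by
    intro t ht
    by_cases hat : f a t = 0
    · exact ⟨_, by simp, fun j => by simp, hker_zero t ht a hat ha⟩
    by_cases hbt : f b t = 0
    · exact ⟨_, by simp, fun j => by simp, hker_zero t ht b hbt hb⟩
    have hd := sumElim_one_ne_zero (β := Fin n) (fun v ha hb => hfother v ha hb t ht) hat hbt
    refine ⟨z₀ / d t, fun h => hz₀ (funext fun w => ?_), fun j => by simp [hz₀_inr],
      hHd t ▸ ker_diagonal_mul_mul_diagonal_of_ne_zero ha hz₀ hAz₀ hd⟩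
    exact (div_eq_zero_iff.mp (congrFun h w)).resolve_right (hd w)
  refine ⟨fun t ht => ?_, hker_zero 0 (by simp) a hfa0 ha, hker_zero 1 (by simp) b hfb1 hb⟩
  obtain ⟨v, hv, hv_inr, hker_eq⟩ := hker t ht
  rw [hker_eq]
  refine ⟨finrank_span_singleton hv, fun z hz j => ?_⟩
  obtain ⟨c, rfl⟩ := Submodule.mem_span_singleton.mp hz
  simp [hv_inr]

/-- STIRAP-like transfer: under the control scheme, the kernel of `H t` is
one-dimensional, supported on `V₁`, and localized at `a` at `t = 0` and at `b` at `t = 1`. -/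
theorem stirap_transfer (n : ℕ) (hn : 1 ≤ n)
    (A : Matrix (Fin (n + 1) ⊕ Fin n) (Fin (n + 1) ⊕ Fin n) ℝ)
    (hsymm : A.IsSymm)
    (hbip : ∀ u v : Fin (n + 1), A (Sum.inl u) (Sum.inl v) = 0)
    (a b : Fin (n + 1)) (hab : a ≠ b)
    (ha : (A.submatrix
        (fun i : {w : Fin (n + 1) ⊕ Fin n // w ≠ Sum.inl a} => (i : Fin (n + 1) ⊕ Fin n))
        (fun j : {w : Fin (n + 1) ⊕ Fin n // w ≠ Sum.inl a} => (j : Fin (n + 1) ⊕ Fin n))).det ≠ 0)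
    (hb : (A.submatrix
        (fun i : {w : Fin (n + 1) ⊕ Fin n // w ≠ Sum.inl b} => (i : Fin (n + 1) ⊕ Fin n))
        (fun j : {w : Fin (n + 1) ⊕ Fin n // w ≠ Sum.inl b} => (j : Fin (n + 1) ⊕ Fin n))).det ≠ 0)
    (f : Fin (n + 1) → ℝ → ℝ)
    (hf : ∀ v, ContinuousOn (f v) (Set.Icc 0 1))
    (hfa0 : f a 0 = 0) (hfb1 : f b 1 = 0)
    (hfother : ∀ v : Fin (n + 1), v ≠ a → v ≠ b → ∀ t ∈ Set.Icc (0 : ℝ) 1, f v t ≠ 0)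
    (hnotboth : ∀ t ∈ Set.Icc (0 : ℝ) 1, ¬ (f a t = 0 ∧ f b t = 0))
    (F : ℝ → Matrix (Fin (n + 1) ⊕ Fin n) (Fin (n + 1) ⊕ Fin n) ℝ)
    (hF : ∀ t, F t = Matrix.diagonal (Sum.elim (fun v => f v t) (fun _ => (1 : ℝ))))
    (H : ℝ → Matrix (Fin (n + 1) ⊕ Fin n) (Fin (n + 1) ⊕ Fin n) ℝ)
    (hH : ∀ t, H t = F t * A * F t) :
    (∀ t ∈ Set.Icc (0 : ℝ) 1,
      Module.finrank ℝ (LinearMap.ker (H t).mulVecLin) = 1 ∧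
      ∀ z ∈ LinearMap.ker (H t).mulVecLin, ∀ w : Fin n, z (Sum.inr w) = 0) ∧
    LinearMap.ker (H 0).mulVecLin
      = Submodule.span ℝ {Pi.single (Sum.inl a) (1 : ℝ)} ∧
    LinearMap.ker (H 1).mulVecLin
      = Submodule.span ℝ {Pi.single (Sum.inl b) (1 : ℝ)} :=
  stirap_transfer_general n A hbip a b ha hb f hfa0 hfb1 hfother hnotboth F hF H hH
end

section
/- Let n ≥ 1, let A be a real symmetric (2n+1)×(2n+1) semi-bipartite block matrix with parts V₁ (of size n+1) and V₂ (of size n), and let p ∈ V₁. If det(A₋ₚ) = 0, then there exists a nonzero vector z with A z = 0 whose coordinate at p is zero. -/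
/-!
Deleting `p` leaves the block matrix `[[0, B], [Bᵀ, C]]` whose block `B` (the rows of
`A`'s `V₁ × V₂` block other than `p`) is square. A kernel vector of this matrix forces
`det B = 0`, so `xᵀ B = 0` for some `x ≠ 0`. Extending `x` by zero at `p` and on `V₂` gives
a kernel vector of `A`, because the `V₁ × V₁` block of `A` vanishes.
-/

open Matrix

def Fin.succAboveSumEquiv {n : ℕ} (β : Type*) (a : Fin (n + 1)) :
    Fin n ⊕ β ≃ {w : Fin (n + 1) ⊕ β // w ≠ Sum.inl a} :=
  (Equiv.sumCongr
    ((finSuccAboveEquiv a).trans (Equiv.subtypeEquivRight fun _ => Sum.inl_injective.ne_iff.symm))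
    (Equiv.subtypeUnivEquiv (p := fun b : β => Sum.inr b ≠ Sum.inl a)
      fun _ => Sum.inr_ne_inl).symm
    ).trans (Equiv.subtypeSum (p := (· ≠ Sum.inl a))).symm

theorem Fin.coe_comp_succAboveSumEquiv {n : ℕ} (β : Type*) (a : Fin (n + 1)) :
    (↑) ∘ Fin.succAboveSumEquiv β a = Sum.map a.succAbove id := by
  ext (i | j) <;> rfl

namespace Matrix

theorem det_eq_zero_or_det_eq_zero_of_det_fromBlocks_zero₁₁ {K n : Type*} [Field K] [Fintype n]
    [DecidableEq n] {B C D : Matrix n n K} (h : (fromBlocks 0 B D C).det = 0) :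
    B.det = 0 ∨ D.det = 0 := by
  obtain ⟨y, hy0, hy⟩ := exists_mulVec_eq_zero_iff.mpr h
  rw [fromBlocks_mulVec] at hy
  have hB : B *ᵥ (y ∘ Sum.inr) = 0 := by simpa using congrArg (· ∘ Sum.inl) hy
  have hD : D *ᵥ (y ∘ Sum.inl) + C *ᵥ (y ∘ Sum.inr) = 0 := congrArg (· ∘ Sum.inr) hy
  by_cases hy₂ : y ∘ Sum.inr = 0
  · refine .inr (exists_mulVec_eq_zero_iff.mp
      ⟨y ∘ Sum.inl, fun hy₁ => hy0 ?_, by simpa [hy₂] using hD⟩)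
    rw [← Sum.elim_comp_inl_inr y, hy₁, hy₂, Sum.elim_zero_zero]
  · exact .inl (exists_mulVec_eq_zero_iff.mp ⟨_, hy₂, hB⟩)

theorem mulVec_insertNth_zero {R m : Type*} [NonUnitalNonAssocSemiring R] {n : ℕ}
    (M : Matrix m (Fin (n + 1)) R) (p : Fin (n + 1)) (x : Fin n → R) :
    M *ᵥ Fin.insertNth p 0 x = M.submatrix id p.succAbove *ᵥ x := by
  ext i
  simp [mulVec, dotProduct, Fin.sum_univ_succAbove _ p]

theorem det_submatrix_subtype_ne_inl {R β : Type*} [CommRing R] [Fintype β] [DecidableEq β]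
    {n : ℕ} (A : Matrix (Fin (n + 1) ⊕ β) (Fin (n + 1) ⊕ β) R) (a : Fin (n + 1)) :
    (A.submatrix (Subtype.val : {w // w ≠ Sum.inl a} → _) Subtype.val).det
      = (A.submatrix (Sum.map a.succAbove id) (Sum.map a.succAbove id)).det := by
  rw [← det_submatrix_equiv_self (Fin.succAboveSumEquiv β a), submatrix_submatrix,
    Fin.coe_comp_succAboveSumEquiv]

end Matrix

theorem semiBipartite_exists_kernel_vector_vanishing_at_p_general (n : ℕ)
    (A : Matrix (Fin (n + 1) ⊕ Fin n) (Fin (n + 1) ⊕ Fin n) ℝ)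
    (hsymm : A.IsSymm)
    (hbip : ∀ u v : Fin (n + 1), A (Sum.inl u) (Sum.inl v) = 0)
    (p : Fin (n + 1))
    (hdet : (A.submatrix
        (fun i : {w : Fin (n + 1) ⊕ Fin n // w ≠ Sum.inl p} => (i : Fin (n + 1) ⊕ Fin n))
        (fun j : {w : Fin (n + 1) ⊕ Fin n // w ≠ Sum.inl p} => (j : Fin (n + 1) ⊕ Fin n))).det
        = 0) :
    ∃ z : (Fin (n + 1) ⊕ Fin n) → ℝ, z ≠ 0 ∧ A.mulVec z = 0 ∧ z (Sum.inl p) = 0 := by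
  set B : Matrix (Fin n) (Fin n) ℝ := A.toBlocks₁₂.submatrix p.succAbove id
  have hA₁₁ : A.toBlocks₁₁ = 0 := Matrix.ext hbip
  have hA₂₁ : A.toBlocks₂₁ = A.toBlocks₁₂ᵀ := by
    rw [← fromBlocks_toBlocks A] at hsymm
    exact (isSymm_fromBlocks_iff.mp hsymm).2.1.symm
  have hB : B.det = 0 := by
    have hblocks : A.submatrix (Sum.map p.succAbove id) (Sum.map p.succAbove id)
        = fromBlocks 0 B Bᵀ A.toBlocks₂₂ := by
      rw [← fromBlocks_toBlocks A, hA₁₁, hA₂₁]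
      ext (i | i) (j | j) <;> rfl
    rw [det_submatrix_subtype_ne_inl, hblocks] at hdet
    simpa [det_transpose] using det_eq_zero_or_det_eq_zero_of_det_fromBlocks_zero₁₁ hdet
  obtain ⟨x, hx0, hx⟩ := exists_vecMul_eq_zero_iff.mpr hB
  refine ⟨Sum.elim (Fin.insertNth p 0 x) 0, fun hz => hx0 ?_, ?_, by simp⟩
  · ext i
    simpa using congrFun hz (Sum.inl (p.succAbove i))
  · rw [← fromBlocks_toBlocks A, fromBlocks_mulVec, hA₁₁, hA₂₁]
    have hBx : A.toBlocks₁₂ᵀ.submatrix id p.succAbove *ᵥ x = 0 := by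
      rwa [← transpose_submatrix, mulVec_transpose]
    simp [mulVec_insertNth_zero, hBx]

/-- If `det (A - p) = 0` for a semi-bipartite matrix `A` with `|V₁| = |V₂| + 1`
and `p ∈ V₁`, then `A` has a nonzero kernel vector vanishing at `p`. -/
theorem semiBipartite_exists_kernel_vector_vanishing_at_p (n : ℕ) (hn : 1 ≤ n)
    (A : Matrix (Fin (n + 1) ⊕ Fin n) (Fin (n + 1) ⊕ Fin n) ℝ)
    (hsymm : A.IsSymm)
    (hbip : ∀ u v : Fin (n + 1), A (Sum.inl u) (Sum.inl v) = 0)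
    (p : Fin (n + 1))
    (hdet : (A.submatrix
        (fun i : {w : Fin (n + 1) ⊕ Fin n // w ≠ Sum.inl p} => (i : Fin (n + 1) ⊕ Fin n))
        (fun j : {w : Fin (n + 1) ⊕ Fin n // w ≠ Sum.inl p} => (j : Fin (n + 1) ⊕ Fin n))).det
        = 0) :
    ∃ z : (Fin (n + 1) ⊕ Fin n) → ℝ, z ≠ 0 ∧ A.mulVec z = 0 ∧ z (Sum.inl p) = 0 :=
  semiBipartite_exists_kernel_vector_vanishing_at_p_general n A hsymm hbip p hdet
end

section
/- Let A be a real symmetric N×N matrix (N ≥ 3) and let u ≠ v be two of its indices such that A_{v w} = 0 for every index w ≠ u (in particular A_{vv} = 0) and A_{v u} ≠ 0 (i.e., v is a dangling vertex whose unique neighbour is u). Then the nullity of A equals the nullity of the principal submatrix A₋₍ᵤ,ᵥ₎ obtained by deleting the rows and columns indexed by u and v. -/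
/-!
Row `v` of `A` is `A v u` times the `u`-th unit vector, so every kernel vector vanishes at `u`.
Since column `v` also vanishes off `u`, on the rows indexed by the remaining vertices the kernel
equations of `A` become those of the principal submatrix `A₋₍ᵤ,ᵥ₎`, while row `u` determines the
value at `v` because `A u v ≠ 0`. Hence restriction is a linear isomorphism between the two kernels.
-/

open Matrix

section Sums

variable {ι M : Type*} [Fintype ι] [AddCommMonoid M]

theorem sum_eq_sum_subtype_of_eq_zero (p : ι → Prop) [DecidablePred p] {f : ι → M}
    (hf : ∀ i, ¬ p i → f i = 0) : ∑ i, f i = ∑ i : Subtype p, f i := by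
  rw [← Fintype.sum_subtype_add_sum_subtype p f,
    Fintype.sum_eq_zero (fun i : {i // ¬ p i} => f i) (fun i => hf i i.2), add_zero]

theorem sum_eq_add_add_sum_subtype_ne_ne [DecidableEq ι] {u v : ι} (huv : u ≠ v) (f : ι → M) :
    ∑ i, f i = f u + f v + ∑ i : {w // w ≠ u ∧ w ≠ v}, f i := by
  rw [← Finset.sum_add_sum_compl {u, v} f, Finset.sum_pair huv]
  congr 1
  exact Finset.sum_subtype _ (fun i => by simp) f

end Sums

namespace Matrix

section Semiring

variable {R n : Type*} [NonUnitalNonAssocSemiring R] [Fintype n] {A : Matrix n n R} {u v : n}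

theorem mulVec_apply_eq_of_row_eq_zero (hrow : ∀ w, w ≠ u → A v w = 0) (x : n → R) :
    (A *ᵥ x) v = A v u * x u :=
  Fintype.sum_eq_single u fun w hw => by simp [hrow w hw]

theorem apply_eq_zero_of_mulVec_eq_zero [NoZeroDivisors R] (hrow : ∀ w, w ≠ u → A v w = 0)
    (hvu : A v u ≠ 0) {x : n → R} (hx : A *ᵥ x = 0) : x u = 0 := by
  have hv := congrFun hx v
  rw [mulVec_apply_eq_of_row_eq_zero hrow, Pi.zero_apply] at hv
  exact (mul_eq_zero.mp hv).resolve_left hvu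

theorem mulVec_apply_eq_sum_subtype [DecidableEq n] {x : n → R} (hxu : x u = 0) {w : n}
    (hwv : A w v = 0) :
    (A *ᵥ x) w = ∑ i : {w // w ≠ u ∧ w ≠ v}, A w i * x i :=
  sum_eq_sum_subtype_of_eq_zero _ fun j hj => by
    obtain rfl | rfl : j = u ∨ j = v := by tauto
    · rw [hxu, mul_zero]
    · simp [hwv]

end Semiring

variable {K n : Type*} [Field K] [Fintype n] [DecidableEq n] {A : Matrix n n K} {u v : n}

/-- The value at `v` is the one forced by row `u` of `A x = 0`. -/
noncomputable def danglingExtension (A : Matrix n n K) (u v : n)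
    (y : {w // w ≠ u ∧ w ≠ v} → K) : n → K :=
  fun j =>
    if hu : j = u then 0
    else if hv : j = v then -(A u v)⁻¹ * ∑ i : {w // w ≠ u ∧ w ≠ v}, A u i * y i
    else y ⟨j, hu, hv⟩

@[simp]
theorem danglingExtension_apply_coe (y : {w // w ≠ u ∧ w ≠ v} → K) (i : {w // w ≠ u ∧ w ≠ v}) :
    danglingExtension A u v y i = y i := by
  simp [danglingExtension, i.2.1, i.2.2]

@[simp]
theorem danglingExtension_apply_left (y : {w // w ≠ u ∧ w ≠ v} → K) :
    danglingExtension A u v y u = 0 := by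
  simp [danglingExtension]

theorem danglingExtension_apply_right (huv : u ≠ v) (y : {w // w ≠ u ∧ w ≠ v} → K) :
    danglingExtension A u v y v = -(A u v)⁻¹ * ∑ i : {w // w ≠ u ∧ w ≠ v}, A u i * y i := by
  simp [danglingExtension, huv.symm]

theorem danglingExtension_comp_val (hrow : ∀ w, w ≠ u → A v w = 0) (hvu : A v u ≠ 0)
    (huv : A u v ≠ 0) {x : n → K} (hx : A *ᵥ x = 0) :
    danglingExtension A u v (x ∘ Subtype.val) = x := by
  have hxu := apply_eq_zero_of_mulVec_eq_zero hrow hvu hx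
  funext j
  by_cases hju : j = u
  · rw [hju, danglingExtension_apply_left, hxu]
  by_cases hjv : j = v
  · subst hjv
    have hrow_u := congrFun hx u
    rw [mulVec, dotProduct, sum_eq_add_add_sum_subtype_ne_ne (Ne.symm hju), hxu, mul_zero,
      zero_add, Pi.zero_apply] at hrow_u
    rw [danglingExtension_apply_right (Ne.symm hju)]
    simp only [Function.comp_apply]
    field_simp
    linear_combination -hrow_u
  · exact danglingExtension_apply_coe (x ∘ Subtype.val) ⟨j, hju, hjv⟩

theorem mulVec_danglingExtension_eq_zero (hrow : ∀ w, w ≠ u → A v w = 0)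
    (hcol : ∀ w, w ≠ u → A w v = 0) (huv : A u v ≠ 0) {y : {w // w ≠ u ∧ w ≠ v} → K}
    (hy : A.submatrix (Subtype.val : {w // w ≠ u ∧ w ≠ v} → n) Subtype.val *ᵥ y = 0) :
    A *ᵥ danglingExtension A u v y = 0 := by
  funext w
  by_cases hwv : w = v
  · rw [hwv, mulVec_apply_eq_of_row_eq_zero hrow, danglingExtension_apply_left, mul_zero,
      Pi.zero_apply]
  by_cases hwu : w = u
  · subst hwu
    rw [mulVec, dotProduct, sum_eq_add_add_sum_subtype_ne_ne hwv,
      danglingExtension_apply_left, danglingExtension_apply_right hwv]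
    simp only [danglingExtension_apply_coe, mul_zero, zero_add, Pi.zero_apply]
    field_simp
    ring
  · rw [mulVec_apply_eq_sum_subtype (danglingExtension_apply_left y) (hcol w hwu)]
    simpa [mulVec, dotProduct] using congrFun hy ⟨w, hwu, hwv⟩

theorem submatrix_mulVec_comp_val_eq_zero (hrow : ∀ w, w ≠ u → A v w = 0)
    (hcol : ∀ w, w ≠ u → A w v = 0) (hvu : A v u ≠ 0) {x : n → K} (hx : A *ᵥ x = 0) :
    A.submatrix (Subtype.val : {w // w ≠ u ∧ w ≠ v} → n) Subtype.val *ᵥ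
      (x ∘ Subtype.val : {w // w ≠ u ∧ w ≠ v} → K) = 0 := by
  funext w
  exact (mulVec_apply_eq_sum_subtype (apply_eq_zero_of_mulVec_eq_zero hrow hvu hx)
    (hcol w w.2.1)).symm.trans (congrFun hx w)

noncomputable def kerMulVecLinEquivOfDangling (hrow : ∀ w, w ≠ u → A v w = 0)
    (hcol : ∀ w, w ≠ u → A w v = 0) (hvu : A v u ≠ 0) (huv : A u v ≠ 0) :
    LinearMap.ker A.mulVecLin ≃ₗ[K]
      LinearMap.ker (A.submatrix (Subtype.val : {w // w ≠ u ∧ w ≠ v} → n)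
        (Subtype.val : {w // w ≠ u ∧ w ≠ v} → n)).mulVecLin where
  toLinearMap := (LinearMap.funLeft K K Subtype.val).restrict fun _ hx =>
    submatrix_mulVec_comp_val_eq_zero hrow hcol hvu hx
  invFun y := ⟨danglingExtension A u v y, mulVec_danglingExtension_eq_zero hrow hcol huv y.2⟩
  left_inv x := Subtype.ext (danglingExtension_comp_val hrow hvu huv x.2)
  right_inv y := Subtype.ext (funext fun i => danglingExtension_apply_coe y.1 i)

end Matrix

theorem nullity_eq_of_dangling_vertex_general (N : ℕ)
    (A : Matrix (Fin N) (Fin N) ℝ) (hsymm : A.IsSymm)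
    (u v : Fin N)
    (hdang : ∀ w : Fin N, w ≠ u → A v w = 0) (hvu : A v u ≠ 0) :
    Module.finrank ℝ (LinearMap.ker A.mulVecLin) =
      Module.finrank ℝ (LinearMap.ker
        (A.submatrix
          (fun i : {w : Fin N // w ≠ u ∧ w ≠ v} => (i : Fin N))
          (fun j : {w : Fin N // w ≠ u ∧ w ≠ v} => (j : Fin N))).mulVecLin) := by
  have hcol : ∀ w, w ≠ u → A w v = 0 := fun w hw => by rw [hsymm.apply]; exact hdang w hw
  have huv : A u v ≠ 0 := by rwa [hsymm.apply]
  exact (kerMulVecLinEquivOfDangling hdang hcol hvu huv).finrank_eq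

/-- Removing a dangling vertex `v` together with its unique neighbour `u`
preserves the nullity of a real symmetric matrix. -/
theorem nullity_eq_of_dangling_vertex (N : ℕ) (hN : 3 ≤ N)
    (A : Matrix (Fin N) (Fin N) ℝ) (hsymm : A.IsSymm)
    (u v : Fin N) (huv : u ≠ v)
    (hdang : ∀ w : Fin N, w ≠ u → A v w = 0) (hvu : A v u ≠ 0) :
    Module.finrank ℝ (LinearMap.ker A.mulVecLin) =
      Module.finrank ℝ (LinearMap.ker
        (A.submatrix
          (fun i : {w : Fin N // w ≠ u ∧ w ≠ v} => (i : Fin N))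
          (fun j : {w : Fin N // w ≠ u ∧ w ≠ v} => (j : Fin N))).mulVecLin) :=
  nullity_eq_of_dangling_vertex_general N A hsymm u v hdang hvu
end

section
/- Let A be a real symmetric N×N matrix (N ≥ 4) and let p, u, v be three distinct indices such that A_{v w} = 0 for every index w ≠ u and A_{v u} ≠ 0 (so v is a dangling vertex with unique neighbour u, and p ∉ {u,v}). Then the principal submatrix A₋ₚ (deleting row and column p) is invertible if and only if the principal submatrix A₋₍ₚ,ᵤ,ᵥ₎ (deleting rows and columns p, u, v) is invertible. -/
/-!
Let row and column `v` of `M` vanish except at `u`. In a kernel vector `x` of `M`, row `v` forces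
`x u = 0`, so the rows outside `{u, v}` say that the restriction of `x` is a kernel vector of
`M₋₍u,v₎`; conversely, a kernel vector of `M₋₍u,v₎` extends to one of `M` by choosing `x v` to
balance row `u`, which is possible since `M u v ≠ 0`. So the two kernels are nontrivial together.
For `M = A₋ₚ` the column condition comes from the symmetry of `A`.
-/

open Matrix

theorem Fintype.sum_eq_add_add_sum_subtype_ne_and_ne {α M : Type*} [Fintype α] [DecidableEq α]
    [AddCommMonoid M] {u v : α} (huv : u ≠ v) (f : α → M) :
    ∑ w, f w = f u + f v + ∑ w : {w // w ≠ u ∧ w ≠ v}, f w := by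
  rw [← Finset.sum_add_sum_compl {u, v}, Finset.sum_pair huv,
    Finset.sum_subtype _ (p := fun w => w ≠ u ∧ w ≠ v) (by simp)]

namespace Matrix

local notation:max M "₋₍" u ", " v "₎" => Matrix.submatrix M (fun i : {w // w ≠ u ∧ w ≠ v} => (i : _)) fun j : {w // w ≠ u ∧ w ≠ v} => (j : _)

variable {α : Type*} [Fintype α] {u v : α}

theorem apply_eq_zero_of_mulVec_eq_zero_of_row_eq_single {R : Type*}
    [NonUnitalNonAssocSemiring R] [NoZeroDivisors R] {M : Matrix α α R} (hrow : ∀ w ≠ u, M v w = 0)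
    (hMvu : M v u ≠ 0) {x : α → R} (hx : M *ᵥ x = 0) : x u = 0 := by
  have hv := congrFun hx v
  rw [Pi.zero_apply, mulVec, dotProduct,
    Fintype.sum_eq_single u fun w hw => by rw [hrow w hw, zero_mul]] at hv
  exact (mul_eq_zero.mp hv).resolve_left hMvu

variable [DecidableEq α]

theorem mulVec_apply_eq_add_add_sum_subtype_ne_and_ne {R : Type*} [NonUnitalNonAssocSemiring R]
    {M : Matrix α α R} (huv : u ≠ v) (x : α → R) (i : α) :
    (M *ᵥ x) i = M i u * x u + M i v * x v + ∑ j : {w // w ≠ u ∧ w ≠ v}, M i j * x j :=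
  Fintype.sum_eq_add_add_sum_subtype_ne_and_ne huv _

theorem exists_mulVec_submatrix_eq_zero_of_dangling {R : Type*} [CommRing R] [NoZeroDivisors R]
    {M : Matrix α α R} (huv : u ≠ v) (hrow : ∀ w ≠ u, M v w = 0)
    (hcol : ∀ w ≠ u, M w v = 0) (hMvu : M v u ≠ 0) (hMuv : M u v ≠ 0) {x : α → R} (hx0 : x ≠ 0)
    (hx : M *ᵥ x = 0) :
    ∃ y ≠ 0, M₋₍u, v₎ *ᵥ y = 0 := by
  have hxu := apply_eq_zero_of_mulVec_eq_zero_of_row_eq_single hrow hMvu hx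
  have hsub (i : α) :
      ∑ j : {w // w ≠ u ∧ w ≠ v}, M i j * x (j : α) = (M *ᵥ x) i - M i v * x v := by
    rw [mulVec_apply_eq_add_add_sum_subtype_ne_and_ne huv, hxu]
    ring
  refine ⟨fun j => x (j : α), fun hy => hx0 ?_, funext fun i => ?_⟩
  · have hy (j : {w // w ≠ u ∧ w ≠ v}) : x (j : α) = 0 := congrFun hy j
    have hxv : x v = 0 := by
      have hu := hsub u
      simp only [hy, mul_zero, Finset.sum_const_zero, hx, Pi.zero_apply, zero_sub] at hu
      exact (mul_eq_zero.mp (neg_eq_zero.mp hu.symm)).resolve_left hMuv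
    funext w
    by_cases hwu : w = u
    · rw [hwu, hxu, Pi.zero_apply]
    by_cases hwv : w = v
    · rw [hwv, hxv, Pi.zero_apply]
    exact hy ⟨w, hwu, hwv⟩
  · exact (hsub i).trans
      (by rw [hx, hcol i i.2.1, Pi.zero_apply, zero_mul, sub_zero, Pi.zero_apply])

theorem exists_mulVec_eq_zero_of_dangling {K : Type*} [Field K] {M : Matrix α α K} (huv : u ≠ v)
    (hrow : ∀ w ≠ u, M v w = 0) (hcol : ∀ w ≠ u, M w v = 0) (hMuv : M u v ≠ 0)
    {y : {w // w ≠ u ∧ w ≠ v} → K} (hy0 : y ≠ 0)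
    (hy : M₋₍u, v₎ *ᵥ y = 0) :
    ∃ x ≠ 0, M *ᵥ x = 0 := by
  let t := -(∑ j : {w // w ≠ u ∧ w ≠ v}, M u j * y j) / M u v
  let x : α → K := fun w => if h : w ≠ u ∧ w ≠ v then y ⟨w, h⟩ else if w = v then t else 0
  have hxu : x u = 0 := by simp [x, huv]
  have hxv : x v = t := by simp [x]
  have hxS (j : {w // w ≠ u ∧ w ≠ v}) : x j = y j := dif_pos j.2
  refine ⟨x, fun hx => hy0 (funext fun j => by rw [← hxS, hx, Pi.zero_apply, Pi.zero_apply]),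
    funext fun i => ?_⟩
  rw [mulVec_apply_eq_add_add_sum_subtype_ne_and_ne huv, hxu, hxv, Pi.zero_apply]
  simp only [hxS, mul_zero, zero_add]
  by_cases hiu : i = u
  · rw [hiu, mul_div_cancel₀ _ hMuv, neg_add_cancel]
  by_cases hiv : i = v
  · rw [hiv, hrow v huv.symm, zero_mul, zero_add]
    exact Finset.sum_eq_zero fun j _ => by rw [hrow j j.2.1, zero_mul]
  · rw [hcol i hiu, zero_mul, zero_add]
    exact congrFun hy ⟨i, hiu, hiv⟩

theorem det_ne_zero_iff_det_submatrix_ne_zero_of_dangling {K : Type*} [Field K]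
    {M : Matrix α α K} (huv : u ≠ v)
    (hrow : ∀ w ≠ u, M v w = 0) (hcol : ∀ w ≠ u, M w v = 0) (hMvu : M v u ≠ 0)
    (hMuv : M u v ≠ 0) :
    M.det ≠ 0 ↔ (M₋₍u, v₎).det ≠ 0 := by
  rw [not_iff_not, ← exists_mulVec_eq_zero_iff, ← exists_mulVec_eq_zero_iff]
  exact ⟨fun ⟨_, hx0, hx⟩ =>
      exists_mulVec_submatrix_eq_zero_of_dangling huv hrow hcol hMvu hMuv hx0 hx,
    fun ⟨_, hy0, hy⟩ => exists_mulVec_eq_zero_of_dangling huv hrow hcol hMuv hy0 hy⟩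

end Matrix

theorem principal_submatrix_invertible_iff_of_dangling_vertex_general (N : ℕ)
    (A : Matrix (Fin N) (Fin N) ℝ) (hsymm : A.IsSymm)
    (p u v : Fin N) (hpu : p ≠ u) (hpv : p ≠ v) (huv : u ≠ v)
    (hdang : ∀ w : Fin N, w ≠ u → A v w = 0) (hvu : A v u ≠ 0) :
    (A.submatrix
        (fun i : {w : Fin N // w ≠ p} => (i : Fin N))
        (fun j : {w : Fin N // w ≠ p} => (j : Fin N))).det ≠ 0 ↔
    (A.submatrix
        (fun i : {w : Fin N // w ≠ p ∧ w ≠ u ∧ w ≠ v} => (i : Fin N))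
        (fun j : {w : Fin N // w ≠ p ∧ w ≠ u ∧ w ≠ v} => (j : Fin N))).det ≠ 0 := by
  let u' : {w // w ≠ p} := ⟨u, hpu.symm⟩
  let v' : {w // w ≠ p} := ⟨v, hpv.symm⟩
  have hrow (w : {w // w ≠ p}) (hw : w ≠ u') : A v' w = 0 := hdang w (Subtype.coe_ne_coe.mpr hw)
  have hcol (w : {w // w ≠ p}) (hw : w ≠ u') : A w v' = 0 := (hsymm.apply _ _).trans (hrow w hw)
  let e : {w // w ≠ p ∧ w ≠ u ∧ w ≠ v} ≃ {w : {w // w ≠ p} // w ≠ u' ∧ w ≠ v'} :=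
    (Equiv.subtypeSubtypeEquivSubtypeInter (· ≠ p) fun w => w ≠ u ∧ w ≠ v).symm.trans
      (Equiv.subtypeEquivRight fun w => by simp [u', v', ← Subtype.coe_ne_coe])
  rw [det_ne_zero_iff_det_submatrix_ne_zero_of_dangling (u := u') (v := v')
    (Subtype.coe_ne_coe.mp huv) hrow hcol hvu ((hsymm.apply u v).symm.trans_ne hvu),
    ← det_submatrix_equiv_self e]
  rfl

/-- For a real symmetric matrix with a dangling vertex `v` whose unique neighbour
is `u`, and a third index `p`: the principal submatrix deleting `p` is invertible
iff the principal submatrix deleting `p, u, v` is invertible. -/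
theorem principal_submatrix_invertible_iff_of_dangling_vertex (N : ℕ) (hN : 4 ≤ N)
    (A : Matrix (Fin N) (Fin N) ℝ) (hsymm : A.IsSymm)
    (p u v : Fin N) (hpu : p ≠ u) (hpv : p ≠ v) (huv : u ≠ v)
    (hdang : ∀ w : Fin N, w ≠ u → A v w = 0) (hvu : A v u ≠ 0) :
    (A.submatrix
        (fun i : {w : Fin N // w ≠ p} => (i : Fin N))
        (fun j : {w : Fin N // w ≠ p} => (j : Fin N))).det ≠ 0 ↔
    (A.submatrix
        (fun i : {w : Fin N // w ≠ p ∧ w ≠ u ∧ w ≠ v} => (i : Fin N))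
        (fun j : {w : Fin N // w ≠ p ∧ w ≠ u ∧ w ≠ v} => (j : Fin N))).det ≠ 0 :=
  principal_submatrix_invertible_iff_of_dangling_vertex_general N A hsymm p u v hpu hpv huv hdang
    hvu
end

section
/- Let n ≥ 1 and let S ⊆ Fin n × Fin n be a set of index pairs containing every diagonal pair (i,i). Let (X_s)_{s ∈ S} be independent real-valued random variables, each of whose distribution is atomless (no single value has positive probability). Define the random n×n real matrix M by M_{ij} = X_{(i,j)} if (i,j) ∈ S and M_{ij} = 0 otherwise. Then almost surely det M ≠ 0. -/
/-!
The determinant of the pattern matrix is the evaluation, at the vector of entries, of the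
determinant of the generic pattern matrix with indeterminate entries; this polynomial is nonzero
because it takes the value `1` at the identity matrix, which fits the pattern since `S` contains
the diagonal. By independence, the law of the vector of entries is the product of the atomless
laws of the entries, and a nonzero polynomial vanishes only on a null set for such a product:
by induction on the number of variables and Fubini, since for almost every value of the other
variables the leading coefficient in the first one does not vanish, leaving a nonzero univariate
polynomial with finitely many roots.
-/

open Matrix MeasureTheory ProbabilityTheory

namespace Polynomial

theorem ae_eval_ne_zero {R : Type*} [CommRing R] [IsDomain R] [MeasurableSpace R]
    {ν : Measure R} [NullSingletonClass ν] {q : R[X]} (hq : q ≠ 0) :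
    ∀ᵐ y ∂ν, q.eval y ≠ 0 :=
  measure_eq_zero_iff_ae_notMem.mp ((finite_setOfPred_isRoot hq).measure_zero ν)

end Polynomial

namespace MvPolynomial

theorem measurableSet_setOf_eval_ne_zero {ι : Type*} [Countable ι] (p : MvPolynomial ι ℝ) :
    MeasurableSet {x : ι → ℝ | eval x p ≠ 0} :=
  (continuous_eval p).measurable (measurableSet_singleton 0).compl

theorem ae_pi_fin_eval_ne_zero : ∀ {k : ℕ} (ν : Fin k → Measure ℝ) [∀ i, SigmaFinite (ν i)]
    [∀ i, NullSingletonClass (ν i)] {p : MvPolynomial (Fin k) ℝ}, p ≠ 0 →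
    ∀ᵐ x ∂Measure.pi ν, eval x p ≠ 0
  | 0, _, _, _, p, hp => ae_of_all _ fun x => by
      rwa [eq_C_of_isEmpty p, eval_C, ← map_ne_zero_iff C (C_injective _ _),
        ← eq_C_of_isEmpty]
  | k + 1, ν, _, _, p, hp => by
    set q := finSuccEquiv ℝ k p
    have hq : q ≠ 0 := (map_ne_zero_iff _ (finSuccEquiv ℝ k).injective).mpr hp
    have hslices : ∀ᵐ s ∂Measure.pi (fun j => ν (Fin.succAbove 0 j)),
        ∀ᵐ y ∂ν 0, eval (Fin.cons y s) p ≠ 0 := by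
      filter_upwards [ae_pi_fin_eval_ne_zero _ (Polynomial.leadingCoeff_ne_zero.mpr hq)]
        with s hs
      have hqs : q.map (eval s) ≠ 0 := fun h => hs <| by
        simpa using congr_arg (Polynomial.coeff · q.natDegree) h
      simpa only [eval_eq_eval_mv_eval'] using Polynomial.ae_eval_ne_zero hqs
    set e := MeasurableEquiv.piFinSuccAbove (fun _ : Fin (k + 1) => ℝ) 0
    have he : ∀ z, e.symm z = Fin.cons z.1 z.2 := fun z => Fin.insertNth_zero' z.1 z.2
    have hmeas : MeasurableSet
        {z : ℝ × (Fin k → ℝ) | eval (Fin.cons z.1 z.2 : Fin (k + 1) → ℝ) p ≠ 0} := by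
      simpa only [Set.preimage_ofPred_eq, he] using
        (measurableSet_setOf_eval_ne_zero p).preimage e.symm.measurable
    rw [← (measurePreserving_piFinSuccAbove ν 0).symm.map_eq,
      e.symm.measurableEmbedding.ae_map_iff]
    simp only [he]
    rw [Measure.ae_prod_iff_ae_ae hmeas, Measure.ae_ae_comm hmeas]
    exact hslices

theorem ae_pi_eval_ne_zero {ι : Type*} [Fintype ι] (ν : ι → Measure ℝ)
    [∀ i, SigmaFinite (ν i)] [∀ i, NullSingletonClass (ν i)] {p : MvPolynomial ι ℝ} (hp : p ≠ 0) :
    ∀ᵐ x ∂Measure.pi ν, eval x p ≠ 0 := by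
  set σ := (Fintype.equivFin ι).symm
  have hσ := measurePreserving_piCongrLeft (α := fun _ => ℝ) ν σ
  rw [← hσ.map_eq, (MeasurableEquiv.piCongrLeft _ σ).measurableEmbedding.ae_map_iff]
  have hp' : rename σ.symm p ≠ 0 :=
    (map_ne_zero_iff _ (rename_injective _ σ.symm.injective)).mpr hp
  filter_upwards [ae_pi_fin_eval_ne_zero _ hp'] with x hx
  have hx' : MeasurableEquiv.piCongrLeft (fun _ => ℝ) σ x = x ∘ σ.symm := by
    ext i
    simpa [MeasurableEquiv.coe_piCongrLeft] using
      Equiv.piCongrLeft_apply_apply (fun _ => ℝ) σ x (σ.symm i)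
  rwa [hx', ← eval_rename]

end MvPolynomial

namespace Matrix

variable {m n R : Type*} [DecidableEq m] [DecidableEq n]

def ofPattern [Zero R] (S : Finset (m × n)) (x : S → R) : Matrix m n R :=
  of fun i j => if h : (i, j) ∈ S then x ⟨(i, j), h⟩ else 0

theorem det_ofPattern_eq_eval [Fintype m] [CommRing R] (S : Finset (m × m)) (x : S → R) :
    (ofPattern S x).det = MvPolynomial.eval x (ofPattern S MvPolynomial.X).det := by
  rw [RingHom.map_det]
  congr
  ext i j
  simp only [ofPattern, RingHom.mapMatrix_apply, map_apply, of_apply]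
  split_ifs <;> simp

theorem ofPattern_diag_eq_one [Zero R] [One R] {S : Finset (m × m)} (hS : ∀ i, (i, i) ∈ S) :
    ofPattern S (fun s => if s.1.1 = s.1.2 then (1 : R) else 0) = 1 := by
  ext i j
  by_cases hij : i = j <;> simp [ofPattern, one_apply, hij, hS]

theorem det_ofPattern_X_ne_zero [Fintype m] [CommRing R] [Nontrivial R]
    {S : Finset (m × m)} (hS : ∀ i, (i, i) ∈ S) :
    (ofPattern S (MvPolynomial.X : S → MvPolynomial S R)).det ≠ 0 := by
  intro h
  have := det_ofPattern_eq_eval S (fun s => if s.1.1 = s.1.2 then (1 : R) else 0)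
  rw [ofPattern_diag_eq_one hS, det_one, h, map_zero] at this
  exact one_ne_zero this

end Matrix

theorem det_random_matrix_ne_zero_ae_general (n : ℕ)
    (S : Finset (Fin n × Fin n)) (hS : ∀ i : Fin n, (i, i) ∈ S)
    {Ω : Type*} [MeasurableSpace Ω] (μ : Measure Ω)
    (X : {s // s ∈ S} → Ω → ℝ) (hmeas : ∀ s, Measurable (X s))
    (hindep : iIndepFun X μ)
    (hatomless : ∀ (s : {s // s ∈ S}) (c : ℝ), μ (X s ⁻¹' {c}) = 0) :
    ∀ᵐ ω ∂μ,
      (Matrix.of fun i j : Fin n =>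
          if h : (i, j) ∈ S then X ⟨(i, j), h⟩ ω else 0).det ≠ 0 := by
  have := hindep.isProbabilityMeasure
  have : ∀ s, NullSingletonClass (μ.map (X s)) := fun s => ⟨fun c => by
    rw [Measure.map_apply (hmeas s) (measurableSet_singleton c)]
    exact hatomless s c⟩
  have hgeneric := MvPolynomial.ae_pi_eval_ne_zero (fun s => μ.map (X s))
    (Matrix.det_ofPattern_X_ne_zero (R := ℝ) hS)
  rw [← hindep.map_fun_eq_pi_map fun s => (hmeas s).aemeasurable] at hgeneric
  filter_upwards [ae_of_ae_map (measurable_pi_lambda _ hmeas).aemeasurable hgeneric] with ω hω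
  rwa [← Matrix.det_ofPattern_eq_eval] at hω

/-- A random matrix whose entries at positions in `S` (containing the diagonal)
are independent atomless random variables, and zero elsewhere, almost surely has
nonzero determinant. -/
theorem det_random_matrix_ne_zero_ae (n : ℕ) (hn : 1 ≤ n)
    (S : Finset (Fin n × Fin n)) (hS : ∀ i : Fin n, (i, i) ∈ S)
    {Ω : Type*} [MeasurableSpace Ω] (μ : Measure Ω) [IsProbabilityMeasure μ]
    (X : {s // s ∈ S} → Ω → ℝ) (hmeas : ∀ s, Measurable (X s))
    (hindep : iIndepFun X μ)
    (hatomless : ∀ (s : {s // s ∈ S}) (c : ℝ), μ (X s ⁻¹' {c}) = 0) :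
    ∀ᵐ ω ∂μ,
      (Matrix.of fun i j : Fin n =>
          if h : (i, j) ∈ S then X ⟨(i, j), h⟩ ω else 0).det ≠ 0 :=
  det_random_matrix_ne_zero_ae_general n S hS μ X hmeas hindep hatomless
end

section
/- Let n ≥ 1 and let S ⊆ Fin n × Fin n be a set of index pairs containing every diagonal pair (i,i). Let (X_s)_{s ∈ S} be independent real-valued random variables, each with an atomless distribution, and define the random n×n real matrix B by B_{ij} = X_{(i,j)} if (i,j) ∈ S and B_{ij} = 0 otherwise. Let C : Ω → (n×n real matrices) be any measurable map on the same probability space (possibly depending on the X_s). Then almost surely the 2n×2n block matrix [[0, B], [Bᵀ, C]] has nonzero determinant. -/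
/-!
The block matrix `[[0, B], [Bᵀ, C]]` is invertible as soon as `B` is, so only `det B` matters.
It is the evaluation, at the independent entries `X s`, of the generic determinant with sparsity
pattern `S`; this polynomial is nonzero because the pattern contains the diagonal, so it evaluates
to `det 1 = 1`. Finally, the zero set of a nonzero real polynomial is null for every product of
atomless σ-finite measures: by Fubini in the first variable, outside the null set where the leading
coefficient vanishes, each slice is the finite root set of a nonzero univariate polynomial.
-/

open Matrix MeasureTheory ProbabilityTheory

namespace MvPolynomial

theorem measure_pi_setOf_eval_eq_zero_fin : ∀ {m : ℕ} (ν : Fin m → Measure ℝ)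
    [∀ i, SigmaFinite (ν i)] [∀ i, NullSingletonClass (ν i)] {p : MvPolynomial (Fin m) ℝ},
    p ≠ 0 → Measure.pi ν {x | eval x p = 0} = 0
  | 0, ν, _, _, p, hp => by
    have hconst : ∀ x, eval x p = coeff 0 p := fun x => by
      conv_lhs => rw [eq_C_of_isEmpty p, eval_C]
    have hcoeff : coeff 0 p ≠ 0 := by
      rwa [eq_C_of_isEmpty p, Ne, C_eq_zero] at hp
    simp [hconst, hcoeff]
  | m + 1, ν, _, _, p, hp => by
    set P := finSuccEquiv ℝ m p
    have hP : P ≠ 0 := (map_ne_zero_iff _ (finSuccEquiv ℝ m).injective).2 hp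
    have hlead : ∀ᵐ y ∂Measure.pi (fun j => ν (Fin.succAbove 0 j)),
        eval y P.leadingCoeff ≠ 0 := by
      simpa [ae_iff] using
        measure_pi_setOf_eval_eq_zero_fin _ (Polynomial.leadingCoeff_ne_zero.2 hP)
    have hslice : ∀ y, eval y P.leadingCoeff ≠ 0 →
        ν 0 {t | eval (Fin.cons t y : Fin (m + 1) → ℝ) p = 0} = 0 := by
      intro y hy
      have hne : P.map (eval y) ≠ 0 := fun h => hy (by
        simpa [Polynomial.coeff_map] using congrArg (Polynomial.coeff · P.natDegree) h)
      simp only [eval_eq_eval_mv_eval']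
      exact (Polynomial.finite_setOfPred_isRoot hne).measure_zero (ν 0)
    have hZ : MeasurableSet {x | eval x p = 0} :=
      measurableSet_eq_fun (continuous_eval p).measurable measurable_const
    rw [← (measurePreserving_piFinSuccAbove ν 0).symm.measure_preimage_equiv,
      Measure.prod_apply_symm (hZ.preimage (MeasurableEquiv.measurable _))]
    refine lintegral_eq_zero_of_ae_eq_zero (hlead.mono fun y hy => ?_)
    simpa [MeasurableEquiv.piFinSuccAbove_symm_apply, Fin.insertNthEquiv, Fin.insertNth_zero']
      using hslice y hy

theorem measure_pi_setOf_eval_eq_zero {ι : Type*} [Fintype ι] (ν : ι → Measure ℝ)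
    [∀ i, SigmaFinite (ν i)] [∀ i, NullSingletonClass (ν i)] {p : MvPolynomial ι ℝ}
    (hp : p ≠ 0) : Measure.pi ν {x | eval x p = 0} = 0 := by
  let e := Fintype.equivFin ι
  have hrename : rename e p ≠ 0 := (map_ne_zero_iff _ (rename_injective _ e.injective)).2 hp
  rw [← (measurePreserving_piCongrLeft (μ := ν) e.symm).measure_preimage_equiv]
  convert measure_pi_setOf_eval_eq_zero_fin (fun k => ν (e.symm k)) hrename using 2
  ext x
  have hx : MeasurableEquiv.piCongrLeft (fun _ => ℝ) e.symm x = x ∘ e := by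
    funext i
    simp [MeasurableEquiv.coe_piCongrLeft, Equiv.piCongrLeft_apply_eq_cast]
  simp [hx, eval_rename]

end MvPolynomial

section PatternMatrix

variable {n R : Type*} [DecidableEq n] (S : Finset (n × n))

def patternMatrix [Zero R] (x : S → R) : Matrix n n R :=
  of fun i j => if h : (i, j) ∈ S then x ⟨(i, j), h⟩ else 0

theorem map_patternMatrix {R' : Type*} [Zero R] [Zero R'] (x : S → R) (f : R → R')
    (hf : f 0 = 0) : (patternMatrix S x).map f = patternMatrix S (f ∘ x) := by
  ext i j
  by_cases h : (i, j) ∈ S <;> simp [patternMatrix, h, hf]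

theorem patternMatrix_eq_one [Zero R] [One R] (hS : ∀ i, (i, i) ∈ S) :
    patternMatrix S (fun s => if s.1.1 = s.1.2 then (1 : R) else 0) = 1 := by
  ext i j
  by_cases h : (i, j) ∈ S <;> by_cases hij : i = j <;> simp_all [patternMatrix, one_apply]

variable [Fintype n] [CommRing R]

theorem eval_det_patternMatrix_X (x : S → R) :
    MvPolynomial.eval x (patternMatrix S MvPolynomial.X).det = (patternMatrix S x).det := by
  rw [RingHom.map_det, RingHom.mapMatrix_apply, map_patternMatrix _ _ _ (map_zero _)]
  simp [Function.comp_def]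

theorem det_patternMatrix_X_ne_zero [Nontrivial R] (hS : ∀ i, (i, i) ∈ S) :
    (patternMatrix S (MvPolynomial.X (R := R))).det ≠ 0 := fun h => by
  simpa [eval_det_patternMatrix_X, patternMatrix_eq_one S hS] using
    congrArg (MvPolynomial.eval fun s : S => if s.1.1 = s.1.2 then (1 : R) else 0) h

end PatternMatrix

theorem measure_pi_setOf_det_patternMatrix_eq_zero {n : Type*} [Fintype n] [DecidableEq n]
    {S : Finset (n × n)} (hS : ∀ i, (i, i) ∈ S) (ν : S → Measure ℝ)
    [∀ s, SigmaFinite (ν s)] [∀ s, NullSingletonClass (ν s)] :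
    Measure.pi ν {x | (patternMatrix S x).det = 0} = 0 := by
  simpa [eval_det_patternMatrix_X] using
    MvPolynomial.measure_pi_setOf_eval_eq_zero ν (det_patternMatrix_X_ne_zero S hS)

theorem isUnit_det_fromBlocks_zero₁₁ {n R : Type*} [Fintype n] [DecidableEq n] [CommRing R]
    {B C D : Matrix n n R} (hB : IsUnit B.det) (hC : IsUnit C.det) :
    IsUnit (fromBlocks 0 B C D).det := by
  let J : Matrix (n ⊕ n) (n ⊕ n) R := fromBlocks 0 1 1 0
  have hJ : IsUnit J.det := IsUnit.of_mul_eq_one J.det <| by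
    rw [← det_mul, fromBlocks_multiply]
    simp
  have hfactor : fromBlocks 0 B C D = fromBlocks B 0 D C * J := by
    simp [J, fromBlocks_multiply]
  rw [hfactor, det_mul, det_fromBlocks_zero₁₂]
  exact (hB.mul hC).mul hJ

theorem det_fromBlocks_random_ne_zero_ae_general (n : ℕ)
    (S : Finset (Fin n × Fin n)) (hS : ∀ i : Fin n, (i, i) ∈ S)
    {Ω : Type*} [MeasurableSpace Ω] (μ : Measure Ω)
    (X : {s // s ∈ S} → Ω → ℝ) (hmeas : ∀ s, Measurable (X s))
    (hindep : iIndepFun X μ)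
    (hatomless : ∀ (s : {s // s ∈ S}) (c : ℝ), μ (X s ⁻¹' {c}) = 0)
    (B : Ω → Matrix (Fin n) (Fin n) ℝ)
    (hB : ∀ ω (i j : Fin n), B ω i j = if h : (i, j) ∈ S then X ⟨(i, j), h⟩ ω else 0)
    (C : Ω → Matrix (Fin n) (Fin n) ℝ) :
    ∀ᵐ ω ∂μ,
      (Matrix.fromBlocks (0 : Matrix (Fin n) (Fin n) ℝ) (B ω) (B ω)ᵀ (C ω)).det ≠ 0 := by
  have := hindep.isProbabilityMeasure
  have hatom : ∀ s, NullSingletonClass (μ.map (X s)) := fun s =>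
    ⟨fun c => by rw [Measure.map_apply (hmeas s) (measurableSet_singleton c), hatomless]⟩
  have hlaw : μ.map (fun ω s => X s ω) = Measure.pi fun s => μ.map (X s) :=
    hindep.map_fun_eq_pi_map fun s => (hmeas s).aemeasurable
  have hpattern : ∀ᵐ x ∂μ.map (fun ω s => X s ω), (patternMatrix S x).det ≠ 0 := by
    rw [hlaw, ae_iff]
    simpa using measure_pi_setOf_det_patternMatrix_eq_zero hS _
  have hdetB : ∀ᵐ ω ∂μ, (B ω).det ≠ 0 := by
    have hB' : ∀ ω, B ω = patternMatrix S fun s => X s ω := fun ω => Matrix.ext (hB ω)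
    simpa [hB'] using ae_of_ae_map (measurable_pi_lambda _ hmeas).aemeasurable hpattern
  filter_upwards [hdetB] with ω hω
  exact (isUnit_det_fromBlocks_zero₁₁ (isUnit_iff_ne_zero.2 hω)
    (isUnit_iff_ne_zero.2 (by rwa [det_transpose]))).ne_zero

/-- For a random matrix `B` with independent atomless entries (on a support set
`S` containing the diagonal) and an arbitrary measurable random matrix `C`, the
block matrix `[[0, B], [Bᵀ, C]]` almost surely has nonzero determinant. -/
theorem det_fromBlocks_random_ne_zero_ae (n : ℕ) (hn : 1 ≤ n)
    (S : Finset (Fin n × Fin n)) (hS : ∀ i : Fin n, (i, i) ∈ S)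
    {Ω : Type*} [MeasurableSpace Ω] (μ : Measure Ω) [IsProbabilityMeasure μ]
    (X : {s // s ∈ S} → Ω → ℝ) (hmeas : ∀ s, Measurable (X s))
    (hindep : iIndepFun X μ)
    (hatomless : ∀ (s : {s // s ∈ S}) (c : ℝ), μ (X s ⁻¹' {c}) = 0)
    (B : Ω → Matrix (Fin n) (Fin n) ℝ)
    (hB : ∀ ω (i j : Fin n), B ω i j = if h : (i, j) ∈ S then X ⟨(i, j), h⟩ ω else 0)
    (C : Ω → Matrix (Fin n) (Fin n) ℝ) (hC : ∀ i j : Fin n, Measurable fun ω => C ω i j) :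
    ∀ᵐ ω ∂μ,
      (Matrix.fromBlocks (0 : Matrix (Fin n) (Fin n) ℝ) (B ω) (B ω)ᵀ (C ω)).det ≠ 0 :=
  det_fromBlocks_random_ne_zero_ae_general n S hS μ X hmeas hindep hatomless B hB C
end

section
/- Let A be a real symmetric (n+1)×(n+1) matrix that has 0 as an eigenvalue, let p be one of its indices, and let B = A₋ₚ be the principal n×n submatrix obtained by deleting row and column p. Then every nonzero eigenvalue λ of A satisfies |λ| ≥ min{ |μ| : μ an eigenvalue of B }. (In particular, the spectral gap of A around its zero eigenvalue is at least the smallest absolute value of an eigenvalue of B.) -/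
/-!
Let `A u = 0` and `A v = λ v` with `λ ≠ 0`. Then `u ⊥ v`, and since `A` kills the `u`-component,
every `w` in the plane spanned by `u` and `v` satisfies `‖A w‖ ≤ |λ| ‖w‖`. This plane meets the
hyperplane `w p = 0` in a nonzero vector `w`. Deleting the `p`-th coordinate of `w` gives `x` with
`‖x‖ = ‖w‖` and `‖A₋ₚ x‖ ≤ ‖A w‖`. Finally, expanding `x` in an orthonormal eigenbasis of the
symmetric matrix `A₋ₚ` gives `‖A₋ₚ x‖ ≥ min |μ| · ‖x‖`.
-/

open Matrix Module End WithLp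

theorem norm_le_norm_add_of_inner_eq_zero {F : Type*} [NormedAddCommGroup F]
    [InnerProductSpace ℝ F] {x y : F} (h : inner ℝ x y = 0) : ‖y‖ ≤ ‖x + y‖ := by
  rw [mul_self_le_mul_self_iff (norm_nonneg _) (norm_nonneg _),
    norm_add_sq_eq_norm_sq_add_norm_sq_real h]
  exact le_add_of_nonneg_left (mul_self_nonneg _)

namespace LinearMap.IsSymmetric

section RCLike

variable {𝕜 E : Type*} [RCLike 𝕜] [NormedAddCommGroup E] [InnerProductSpace 𝕜 E]
  {T : E →ₗ[𝕜] E}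

theorem inner_eq_zero_of_mem_eigenspace (hT : T.IsSymmetric) {μ ν : 𝕜} (hμν : μ ≠ ν)
    {x y : E} (hx : x ∈ eigenspace T μ) (hy : y ∈ eigenspace T ν) : inner 𝕜 x y = 0 :=
  hT.orthogonalFamily_eigenspaces hμν ⟨x, hx⟩ ⟨y, hy⟩

theorem exists_hasEigenvalue_forall_abs_mul_norm_le [FiniteDimensional 𝕜 E] [Nontrivial E]
    (hT : T.IsSymmetric) :
    ∃ μ : ℝ, HasEigenvalue T μ ∧ ∀ x, |μ| * ‖x‖ ≤ ‖T x‖ := by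
  have hn : finrank 𝕜 E = finrank 𝕜 E := rfl
  set b := hT.eigenvectorBasis hn
  set μ := hT.eigenvalues hn
  have : Nonempty (Fin (finrank 𝕜 E)) := ⟨⟨0, finrank_pos⟩⟩
  obtain ⟨i₀, -, hmin⟩ := Finset.univ.exists_min_image (fun i => |μ i|) Finset.univ_nonempty
  refine ⟨μ i₀, hT.hasEigenvalue_eigenvalues hn i₀, fun x => ?_⟩
  rw [← pow_le_pow_iff_left₀ (by positivity) (norm_nonneg _) two_ne_zero,
    ← b.repr.norm_map, ← b.repr.norm_map, mul_pow, EuclideanSpace.norm_sq_eq,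
    EuclideanSpace.norm_sq_eq, Finset.mul_sum]
  gcongr with i
  rw [hT.eigenvectorBasis_apply_self_apply, norm_mul, mul_pow, RCLike.norm_ofReal]
  gcongr ?_ * _
  exact pow_le_pow_left₀ (abs_nonneg _) (hmin i (Finset.mem_univ i)) 2

end RCLike

section Real

variable {E : Type*} [NormedAddCommGroup E] [InnerProductSpace ℝ E] {T : E →ₗ[ℝ] E}

theorem norm_apply_add_le (hT : T.IsSymmetric) {lam : ℝ} (hlam : lam ≠ 0) {x y : E}
    (hx : x ∈ eigenspace T 0) (hy : y ∈ eigenspace T lam) :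
    ‖T (x + y)‖ ≤ |lam| * ‖x + y‖ := by
  have hTxy : T (x + y) = lam • y := by
    rw [map_add, mem_eigenspace_iff.1 hx, mem_eigenspace_iff.1 hy, zero_smul, zero_add]
  rw [hTxy, norm_smul, Real.norm_eq_abs]
  exact mul_le_mul_of_nonneg_left (norm_le_norm_add_of_inner_eq_zero
    (hT.inner_eq_zero_of_mem_eigenspace hlam.symm hx hy)) (abs_nonneg lam)

theorem exists_ne_zero_map_eq_zero_norm_apply_le (hT : T.IsSymmetric)
    (h0 : HasEigenvalue T 0) {lam : ℝ} (hlam : lam ≠ 0) (hev : HasEigenvalue T lam)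
    (φ : E →ₗ[ℝ] ℝ) : ∃ w, w ≠ 0 ∧ φ w = 0 ∧ ‖T w‖ ≤ |lam| * ‖w‖ := by
  obtain ⟨u, hu, hu0⟩ := h0.exists_hasEigenvector
  obtain ⟨v, hv, hv0⟩ := hev.exists_hasEigenvector
  by_cases hφv : φ v = 0
  · exact ⟨v, hv0, hφv, by simpa using hT.norm_apply_add_le hlam (zero_mem _) hv⟩
  -- `φ v • u - φ u • v` lies in `ker φ`, and is nonzero because its `u`-component is.
  have hu' := Submodule.smul_mem _ (φ v) hu
  have hv' := Submodule.smul_mem _ (-φ u) hv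
  refine ⟨φ v • u + (-φ u) • v, fun hw => ?_, ?_, hT.norm_apply_add_le hlam hu' hv'⟩
  · have := norm_le_norm_add_of_inner_eq_zero (hT.inner_eq_zero_of_mem_eigenspace hlam hv' hu')
    rw [add_comm, hw, norm_zero, norm_le_zero_iff, smul_eq_zero] at this
    tauto
  · simp only [map_add, map_smul, smul_eq_mul]
    ring

end Real

end LinearMap.IsSymmetric

section Matrix

variable {𝕜 ι : Type*} [RCLike 𝕜] [Fintype ι]

theorem Matrix.hasEigenvalue_toEuclideanLin_iff [DecidableEq ι] {A : Matrix ι ι 𝕜} {μ : 𝕜} :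
    HasEigenvalue A.toEuclideanLin μ ↔ HasEigenvalue A.mulVecLin μ := by
  rw [hasEigenvalue_iff_mem_spectrum, hasEigenvalue_iff_mem_spectrum, spectrum_toLpLin,
    ← spectrum_toLin']
  rfl

section Restrict

variable {P : ι → Prop} [DecidablePred P]

theorem EuclideanSpace.norm_restrict_le (y : EuclideanSpace 𝕜 ι) :
    ‖toLp 2 fun i : Subtype P => y i‖ ≤ ‖y‖ := by
  simp only [EuclideanSpace.norm_eq]
  gcongr
  rw [← Fintype.sum_subtype_add_sum_subtype P]
  exact le_add_of_nonneg_right (Finset.sum_nonneg fun i _ => by positivity)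

theorem EuclideanSpace.norm_restrict_of_forall_not (y : EuclideanSpace 𝕜 ι)
    (hy : ∀ i, ¬P i → y i = 0) : ‖toLp 2 fun i : Subtype P => y i‖ = ‖y‖ := by
  simp only [EuclideanSpace.norm_eq]
  rw [← Fintype.sum_subtype_add_sum_subtype P,
    Fintype.sum_eq_zero (fun i : {i // ¬P i} => ‖y i‖ ^ 2) fun i => by simp [hy i i.2], add_zero]

theorem Matrix.submatrix_val_mulVec_restrict {R : Type*} [NonUnitalNonAssocSemiring R]
    (A : Matrix ι ι R) (y : ι → R) (hy : ∀ i, ¬P i → y i = 0) :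
    A.submatrix Subtype.val Subtype.val *ᵥ (fun i : Subtype P => y i) =
      fun i : Subtype P => (A *ᵥ y) i := by
  funext i
  simp only [mulVec, dotProduct, submatrix_apply]
  rw [← Fintype.sum_subtype_add_sum_subtype P,
    Fintype.sum_eq_zero (fun j : {j // ¬P j} => A i j * y j) fun j => by simp [hy j j.2], add_zero]

end Restrict

end Matrix

/-- Cauchy interlacing bound on the spectral gap around zero: if the real
symmetric matrix `A` has `0` as an eigenvalue, then every nonzero eigenvalue `λ`
of `A` satisfies `|λ| ≥ min { |μ| : μ eigenvalue of A₋ₚ }`. -/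
theorem gap_ge_min_abs_eigenvalue_of_principal_submatrix (n : ℕ)
    (A : Matrix (Fin (n + 1)) (Fin (n + 1)) ℝ) (hsymm : A.IsSymm)
    (h0 : Module.End.HasEigenvalue A.mulVecLin (0 : ℝ))
    (p : Fin (n + 1)) :
    ∀ lam : ℝ, lam ≠ 0 → Module.End.HasEigenvalue A.mulVecLin lam →
      sInf {r : ℝ | ∃ μ : ℝ,
          Module.End.HasEigenvalue
            ((A.submatrix
              (fun i : {w : Fin (n + 1) // w ≠ p} => (i : Fin (n + 1)))
              (fun j : {w : Fin (n + 1) // w ≠ p} => (j : Fin (n + 1)))).mulVecLin) μ ∧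
          r = |μ|} ≤ |lam| := by
  intro lam hlam hev
  set B := A.submatrix (Subtype.val : {w // w ≠ p} → Fin (n + 1)) Subtype.val
  have hA : A.toEuclideanLin.IsSymmetric :=
    isSymmetric_toEuclideanLin_iff.2 (isHermitian_iff_isSymm.2 hsymm)
  have hB : B.toEuclideanLin.IsSymmetric :=
    isSymmetric_toEuclideanLin_iff.2 (isHermitian_iff_isSymm.2 (hsymm.submatrix _))
  obtain ⟨w, hw0, hwp, hw⟩ := hA.exists_ne_zero_map_eq_zero_norm_apply_le
    (hasEigenvalue_toEuclideanLin_iff.2 h0) hlam (hasEigenvalue_toEuclideanLin_iff.2 hev)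
    (PiLp.projₗ 2 _ p)
  set x := toLp 2 fun i : {w // w ≠ p} => w i
  have hw_out : ∀ i, ¬i ≠ p → w i = 0 := fun i hi => not_not.1 hi ▸ hwp
  have hwx : ‖x‖ = ‖w‖ := EuclideanSpace.norm_restrict_of_forall_not w hw_out
  have hx : 0 < ‖x‖ := hwx ▸ norm_pos_iff.2 hw0
  have : Nontrivial (EuclideanSpace ℝ {w // w ≠ p}) := nontrivial_of_ne x 0 (norm_pos_iff.1 hx)
  obtain ⟨μ, hμ, hμx⟩ := hB.exists_hasEigenvalue_forall_abs_mul_norm_le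
  have hBx : B.toEuclideanLin x = toLp 2 fun i : {w // w ≠ p} => A.toEuclideanLin w i :=
    congrArg (toLp 2) (submatrix_val_mulVec_restrict A (ofLp w) hw_out)
  have hμlam : |μ| * ‖x‖ ≤ |lam| * ‖x‖ := calc
    |μ| * ‖x‖ ≤ ‖B.toEuclideanLin x‖ := hμx x
    _ ≤ ‖A.toEuclideanLin w‖ := hBx ▸ EuclideanSpace.norm_restrict_le _
    _ ≤ |lam| * ‖x‖ := hwx ▸ hw
  have hbdd : BddBelow {r : ℝ | ∃ ν : ℝ, HasEigenvalue B.mulVecLin ν ∧ r = |ν|} := by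
    refine ⟨0, ?_⟩
    rintro r ⟨ν, -, rfl⟩
    exact abs_nonneg ν
  exact (csInf_le hbdd ⟨μ, hasEigenvalue_toEuclideanLin_iff.1 hμ, rfl⟩).trans
    (le_of_mul_le_mul_right hμlam hx)
end

section
/- Let T be a finite tree (a connected acyclic simple graph) with nonempty vertex set V and edge set E. Then the subspace K = { x : V → ℝ | x_u + x_v = 0 for every edge uv ∈ E } of ℝ^V is exactly one-dimensional, and every nonzero x ∈ K satisfies x_v ≠ 0 for every vertex v ∈ V. (Equivalently: the adjacency matrix of the subdivision of T, which has block form [[0, N], [Nᵀ, 0]] with N the unsigned vertex-edge incidence matrix of T, has a one-dimensional kernel, spanned by a vector that is nonzero on every original vertex of T.) -/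
/-!
Along any walk a solution of `x u + x v = 0` changes sign at every step, so on a connected graph
it is determined by its value at one vertex `r`: `x v = (-1) ^ dist r v * x r`. This makes the
solution space at most one-dimensional and shows that a solution vanishing at one vertex vanishes
everywhere. In a tree adjacent vertices have distances to `r` differing by one, so
`v ↦ (-1) ^ dist r v` is itself a solution.
-/

namespace SimpleGraph

variable {V R : Type*} {G : SimpleGraph V} [Ring R] {y : V → R}

theorem Walk.apply_eq_neg_one_pow_length_mul (hy : ∀ u v, G.Adj u v → y u + y v = 0)
    {a b : V} (w : G.Walk a b) : y b = (-1) ^ w.length * y a := by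
  induction w with
  | nil => simp
  | @cons u v _ huv _ ih =>
    rw [ih, Walk.length_cons, pow_succ, eq_neg_of_add_eq_zero_right (hy u v huv)]
    rw [mul_assoc, neg_one_mul]

theorem Connected.apply_eq_neg_one_pow_dist_mul (hG : G.Connected)
    (hy : ∀ u v, G.Adj u v → y u + y v = 0) (r v : V) :
    y v = (-1) ^ G.dist r v * y r := by
  obtain ⟨w, hw⟩ := hG.exists_walk_length_eq_dist r v
  rw [← hw, w.apply_eq_neg_one_pow_length_mul hy]

theorem Connected.eq_zero_of_apply_eq_zero (hG : G.Connected)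
    (hy : ∀ u v, G.Adj u v → y u + y v = 0) {r : V} (hr : y r = 0) : y = 0 := by
  funext v
  rw [hG.apply_eq_neg_one_pow_dist_mul hy r v, hr, mul_zero, Pi.zero_apply]

theorem IsTree.neg_one_pow_dist_add_neg_one_pow_dist (hG : G.IsTree) (r : V) {u v : V}
    (huv : G.Adj u v) : (-1 : R) ^ G.dist r u + (-1) ^ G.dist r v = 0 := by
  rcases hG.dist_eq_dist_add_one_of_adj r huv with h | h <;> simp [h, pow_succ]

end SimpleGraph

theorem tree_kernel_one_dimensional_general {V : Type*}
    (G : SimpleGraph V) (hT : G.IsTree) :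
    ∃ x : V → ℝ, x ≠ 0 ∧ (∀ u v : V, G.Adj u v → x u + x v = 0) ∧
      (∀ y : V → ℝ, (∀ u v : V, G.Adj u v → y u + y v = 0) → ∃ c : ℝ, y = c • x) ∧
      (∀ y : V → ℝ, (∀ u v : V, G.Adj u v → y u + y v = 0) → y ≠ 0 →
        ∀ v : V, y v ≠ 0) := by
  obtain ⟨r⟩ := hT.connected.nonempty
  refine ⟨fun v ↦ (-1) ^ G.dist r v, fun h ↦ ?_,
    fun u v ↦ hT.neg_one_pow_dist_add_neg_one_pow_dist r,
    fun y hy ↦ ⟨y r, funext fun v ↦ ?_⟩,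
    fun y hy hy0 v hv ↦ hy0 (hT.connected.eq_zero_of_apply_eq_zero hy hv)⟩
  · simpa using congrFun h r
  · rw [hT.connected.apply_eq_neg_one_pow_dist_mul hy r v, Pi.smul_apply, smul_eq_mul, mul_comm]

/-- For a finite tree `T`, the space `K = {x : V → ℝ | x u + x v = 0 for every
edge uv}` is exactly one-dimensional, and every nonzero element of `K` is
nonzero at every vertex. -/
theorem tree_kernel_one_dimensional {V : Type*} [Fintype V] [Nonempty V]
    (G : SimpleGraph V) (hT : G.IsTree) :
    ∃ x : V → ℝ, x ≠ 0 ∧ (∀ u v : V, G.Adj u v → x u + x v = 0) ∧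
      (∀ y : V → ℝ, (∀ u v : V, G.Adj u v → y u + y v = 0) → ∃ c : ℝ, y = c • x) ∧
      (∀ y : V → ℝ, (∀ u v : V, G.Adj u v → y u + y v = 0) → y ≠ 0 →
        ∀ v : V, y v ≠ 0) :=
  tree_kernel_one_dimensional_general G hT
end
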